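/- arXiv:1706.02553 — 6 statements merged into one kernel-verified Lean document; each statement's English description precedes it below -/
import Mathlib

section
/- Let V be a multi vector space over X, Y a proper subspace of X, and t ∈ X \ Y such that C_V(t) = sup{C_V(x) : x ∈ X \ Y} (assume this supremum is attained at t). Then for all y ∈ Y, C_V(t + y) = min(C_V(t), C_V(y)). -/
theorem mvs_count_add_sup_complement {K X : Type*} [Field K] [AddCommGroup X] [Module K X]
    (C : X → ℕ)
    (hadd : ∀ x y : X, min (C x) (C y) ≤ C (x + y))
    (hsmul : ∀ (a : K) (x : X), C x ≤ C (a • x))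
    (Y : Submodule K X) (hY : Y ≠ ⊤)
    (t : X) (ht : t ∉ Y) (hsup : ∀ x : X, x ∉ Y → C x ≤ C t) :
    ∀ y ∈ Y, C (t + y) = min (C t) (C y) := by
  intro y hy
  have hneg : ∀ x : X, C x ≤ C (-x) := by
    intro x
    have := hsmul (-1 : K) x
    simpa using this
  have hnt : C t ≤ C (-t) := hneg t
  have hty : t + y ∉ Y := by
    intro h
    exact ht (by simpa using Y.sub_mem h hy)
  have h1 : C (t + y) ≤ C t := hsup _ hty
  have h2 : min (C t) (C y) ≤ C (t + y) := hadd t y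
  rcases le_or_gt (C t) (C y) with h | h
  · have : min (C t) (C y) = C t := min_eq_left h
    omega
  · -- C y < C t; show C (t+y) ≤ C y
    have key : min (C (t + y)) (C (-t)) ≤ C y := by
      have := hadd (t + y) (-t)
      simpa [add_comm, add_assoc, add_left_comm] using this
    have : min (C (t + y)) (C (-t)) ≤ C y := key
    omega
end

section
/- Let V be a multi vector space over a finite-dimensional vector space X with distinct nonzero-vector count values n₀ > n₁ > ... > n_k attained on X \ {0}, and corresponding level subspaces V_{n_i} = {x : C_V(x) ≥ n_i}. If B is a basis of X such that B ∩ V_{n_i} spans V_{n_i} (hence is a basis of V_{n_i}) for every i, then B is multi linearly independent in V: for any finitely many distinct elements x₁,...,x_r of B and nonzero scalars a₁,...,a_r, C_V(∑ a_i x_i) = min_i C_V(a_i x_i). -/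
/-!
The inequality `min ≤ C (∑ ...)` is the ultrametric inequality for `C`, extended to finite sums.
For the converse, the sum `x` is nonzero, so `C x` is some level `n j` and `x ∈ V j`. Since `V j`
is spanned by the basis vectors it contains, every basis vector occurring in `x` with a nonzero
coefficient lies in `V j`, hence `n j ≤ C (a i • b i)` for each `i`.
-/

section CountFunction

variable {K X α : Type*} [LinearOrder α] (C : X → α)

theorem map_smul_eq_of_le_map_smul [DivisionRing K] [AddCommGroup X] [Module K X]
    (hsmul : ∀ (a : K) (x : X), C x ≤ C (a • x)) {c : K} (hc : c ≠ 0) (x : X) :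
    C (c • x) = C x := by
  refine le_antisymm ?_ (hsmul c x)
  simpa only [smul_smul, inv_mul_cancel₀ hc, one_smul] using hsmul c⁻¹ (c • x)

theorem Finset.inf'_le_map_sum_of_min_le_map_add {ι : Type*} [AddCommMonoid X]
    (hadd : ∀ x y : X, min (C x) (C y) ≤ C (x + y)) {s : Finset ι} (hs : s.Nonempty)
    (f : ι → X) : s.inf' hs (fun i => C (f i)) ≤ C (∑ i ∈ s, f i) := by
  induction hs using Finset.Nonempty.cons_induction with
  | singleton i => simp
  | cons i t hit ht ih =>
    rw [Finset.sum_cons, Finset.inf'_cons ht]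
    exact (min_le_min le_rfl ih).trans (hadd _ _)

end CountFunction

namespace Module.Basis

variable {R M ι : Type*} [Semiring R] [AddCommMonoid M] [Module R M] (b : Basis ι R M)

theorem repr_sum_smul_apply_of_mem {s : Finset ι} (a : ι → R) {i : ι} (hi : i ∈ s) :
    b.repr (∑ j ∈ s, a j • b j) i = a i := by
  classical
  simp [Finsupp.single_apply, hi]

theorem sum_smul_ne_zero {s : Finset ι} (hs : s.Nonempty) {a : ι → R}
    (ha : ∀ i ∈ s, a i ≠ 0) : ∑ j ∈ s, a j • b j ≠ 0 := by
  obtain ⟨i, hi⟩ := hs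
  intro h
  exact ha i hi (by simpa [h] using (b.repr_sum_smul_apply_of_mem a hi).symm)

theorem mem_of_sum_smul_mem {W : Submodule R M} (hW : Submodule.span R (Set.range b ∩ W) = W)
    {s : Finset ι} {a : ι → R} (ha : ∀ i ∈ s, a i ≠ 0) (hmem : ∑ j ∈ s, a j • b j ∈ W)
    {i : ι} (hi : i ∈ s) : b i ∈ W := by
  rw [← hW, Set.inter_comm, ← Set.image_preimage_eq_inter_range, b.mem_span_image] at hmem
  refine hmem ?_
  rw [Finset.mem_coe, Finsupp.mem_support_iff, b.repr_sum_smul_apply_of_mem a hi]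
  exact ha i hi

end Module.Basis

theorem mvs_basis_spanning_levels_multiIndep_general
    {K X ι : Type*} [Field K] [AddCommGroup X] [Module K X]
    (C : X → ℕ)
    (hadd : ∀ x y : X, min (C x) (C y) ≤ C (x + y))
    (hsmul : ∀ (a : K) (x : X), C x ≤ C (a • x))
    (k : ℕ) (n : Fin (k + 1) → ℕ)
    (hvals : ∀ x : X, x ≠ 0 → ∃ i, C x = n i)
    (V : Fin (k + 1) → Submodule K X)
    (hV : ∀ i, (V i : Set X) = {x : X | n i ≤ C x})
    (b : Module.Basis ι K X)
    (hspan : ∀ i, Submodule.span K (Set.range ⇑b ∩ (V i : Set X)) = V i) :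
    ∀ (s : Finset ι) (hs : s.Nonempty) (a : ι → K), (∀ i ∈ s, a i ≠ 0) →
      C (∑ i ∈ s, a i • b i) = s.inf' hs (fun i => C (a i • b i)) := by
  intro s hs a ha
  refine le_antisymm ?_ (Finset.inf'_le_map_sum_of_min_le_map_add C hadd hs _)
  have mem_V {j : Fin (k + 1)} {x : X} : x ∈ V j ↔ n j ≤ C x := by
    rw [← SetLike.mem_coe, hV j, Set.mem_ofPred_eq]
  obtain ⟨j, hj⟩ := hvals _ (b.sum_smul_ne_zero hs ha)
  have hsum : ∑ i ∈ s, a i • b i ∈ V j := mem_V.mpr hj.ge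
  refine Finset.le_inf' hs _ fun i hi => ?_
  rw [map_smul_eq_of_le_map_smul C hsmul (ha i hi), hj]
  exact mem_V.mp (b.mem_of_sum_smul_mem (hspan j) ha hsum hi)

/-- if a basis `b` of `X` meets each level subspace `V i` in a spanning
set, then `b` is multi linearly independent in `V`. -/
theorem mvs_basis_spanning_levels_multiIndep
    {K X ι : Type*} [Field K] [AddCommGroup X] [Module K X] [FiniteDimensional K X]
    (C : X → ℕ)
    (hadd : ∀ x y : X, min (C x) (C y) ≤ C (x + y))
    (hsmul : ∀ (a : K) (x : X), C x ≤ C (a • x))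
    (k : ℕ) (n : Fin (k + 1) → ℕ) (hanti : StrictAnti n)
    (hvals : ∀ x : X, x ≠ 0 → ∃ i, C x = n i)
    (hattained : ∀ i, ∃ x : X, x ≠ 0 ∧ C x = n i)
    (V : Fin (k + 1) → Submodule K X)
    (hV : ∀ i, (V i : Set X) = {x : X | n i ≤ C x})
    (b : Module.Basis ι K X)
    (hspan : ∀ i, Submodule.span K (Set.range ⇑b ∩ (V i : Set X)) = V i) :
    ∀ (s : Finset ι) (hs : s.Nonempty) (a : ι → K), (∀ i ∈ s, a i ≠ 0) →
      C (∑ i ∈ s, a i • b i) = s.inf' hs (fun i => C (a i • b i)) :=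
  mvs_basis_spanning_levels_multiIndep_general C hadd hsmul k n hvals V hV b hspan
end

section
/- Let V be a multi vector space over a finite-dimensional vector space X, with counts on X \ {0} taking values n₀ > n₁ > ... > n_k. If a basis B of X is multi linearly independent in V (i.e., an M-basis), then for every i, B ∩ V_{n_i} is a basis of the subspace V_{n_i} = {x : C_V(x) ≥ n_i}. -/
/-!
Expanding `x` in an M-basis gives `C x = min_j C (b j)` over the basis vectors `b j` occurring
in `x`, so every basis vector occurring in a vector of `V_m` lies in `V_m` itself. Hence each
vector of `V_m` is a combination of basis vectors in `V_m`, and those are independent as part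
of a basis.
-/

namespace Module.Basis

variable {R X ι : Type*} [Semiring R] [AddCommMonoid X] [Module R X]

theorem span_range_inter_eq (b : Basis ι R X) {W : Submodule R X}
    (hW : ∀ x ∈ W, ∀ j ∈ (b.repr x).support, b j ∈ W) :
    Submodule.span R (Set.range b ∩ W) = W := by
  refine le_antisymm (Submodule.span_le.mpr Set.inter_subset_right) fun x hx => ?_
  rw [← Set.image_preimage_eq_range_inter, b.mem_span_image]
  exact hW x hx

theorem linearIndependent_range_inter [Nontrivial R] (b : Basis ι R X) (s : Set X) :
    LinearIndependent R (fun x : ↥(Set.range b ∩ s) => (x : X)) :=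
  (((linearIndepOn_id_range_iff b.injective).mpr b.linearIndependent).mono
    Set.inter_subset_left).linearIndependent

def IsMBasis (C : X → ℕ) (b : Basis ι R X) : Prop :=
  ∀ (s : Finset ι) (hs : s.Nonempty) (a : ι → R), (∀ i ∈ s, a i ≠ 0) →
    C (∑ i ∈ s, a i • b i) = s.inf' hs (fun i => C (b i))

variable {C : X → ℕ} {b : Basis ι R X}

theorem IsMBasis.apply_eq_inf'_support (hb : b.IsMBasis C) (x : X)
    (hx : (b.repr x).support.Nonempty) :
    C x = (b.repr x).support.inf' hx (fun j => C (b j)) := by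
  have hsum : ∑ j ∈ (b.repr x).support, b.repr x j • b j = x := by
    conv_rhs => rw [← b.linearCombination_repr x]
    rw [Finsupp.linearCombination_apply, Finsupp.sum]
  rw [← hb _ hx (b.repr x) fun j hj => Finsupp.mem_support_iff.mp hj, hsum]

theorem IsMBasis.apply_le_of_mem_support (hb : b.IsMBasis C) {x : X} {j : ι}
    (hj : j ∈ (b.repr x).support) : C x ≤ C (b j) := by
  rw [hb.apply_eq_inf'_support x ⟨j, hj⟩]
  exact Finset.inf'_le _ hj

theorem IsMBasis.span_range_inter_eq_level (hb : b.IsMBasis C) {m : ℕ} {W : Submodule R X}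
    (hW : (W : Set X) = {x | m ≤ C x}) :
    Submodule.span R (Set.range b ∩ W) = W := by
  have hmem : ∀ x, x ∈ W ↔ m ≤ C x := fun x => Set.ext_iff.mp hW x
  refine b.span_range_inter_eq fun x hx j hj => ?_
  exact (hmem _).mpr (((hmem x).mp hx).trans (hb.apply_le_of_mem_support hj))

end Module.Basis

theorem mvs_Mbasis_meets_levels_in_basis_general
    {K X ι : Type*} [Field K] [AddCommGroup X] [Module K X]
    (C : X → ℕ)
    (k : ℕ) (n : Fin (k + 1) → ℕ)
    (V : Fin (k + 1) → Submodule K X)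
    (hV : ∀ i, (V i : Set X) = {x : X | n i ≤ C x})
    (b : Module.Basis ι K X)
    (hM : ∀ (s : Finset ι) (hs : s.Nonempty) (a : ι → K), (∀ i ∈ s, a i ≠ 0) →
      C (∑ i ∈ s, a i • b i) = s.inf' hs (fun i => C (b i))) :
    ∀ i, LinearIndependent K
        (fun x : ↥(Set.range ⇑b ∩ (V i : Set X)) => (x : X)) ∧
      Submodule.span K (Set.range ⇑b ∩ (V i : Set X)) = V i := by
  have hb : b.IsMBasis C := hM
  exact fun i => ⟨b.linearIndependent_range_inter _, hb.span_range_inter_eq_level (hV i)⟩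

/-- if a basis `b` of `X` is an M-basis for `V`, then `B ∩ V_{n_i}` is a
basis of the level subspace `V i` for every `i`. -/
theorem mvs_Mbasis_meets_levels_in_basis
    {K X ι : Type*} [Field K] [AddCommGroup X] [Module K X] [FiniteDimensional K X]
    (C : X → ℕ)
    (hadd : ∀ x y : X, min (C x) (C y) ≤ C (x + y))
    (hsmul : ∀ (a : K) (x : X), C x ≤ C (a • x))
    (k : ℕ) (n : Fin (k + 1) → ℕ) (hanti : StrictAnti n)
    (hvals : ∀ x : X, x ≠ 0 → ∃ i, C x = n i)
    (hattained : ∀ i, ∃ x : X, x ≠ 0 ∧ C x = n i)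
    (V : Fin (k + 1) → Submodule K X)
    (hV : ∀ i, (V i : Set X) = {x : X | n i ≤ C x})
    (b : Module.Basis ι K X)
    (hM : ∀ (s : Finset ι) (hs : s.Nonempty) (a : ι → K), (∀ i ∈ s, a i ≠ 0) →
      C (∑ i ∈ s, a i • b i) = s.inf' hs (fun i => C (b i))) :
    ∀ i, LinearIndependent K
        (fun x : ↥(Set.range ⇑b ∩ (V i : Set X)) => (x : X)) ∧
      Submodule.span K (Set.range ⇑b ∩ (V i : Set X)) = V i :=
  mvs_Mbasis_meets_levels_in_basis_general C k n V hV b hM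
end

section
/- Every multi vector space V over a finite-dimensional vector space X admits an M-basis, i.e., a basis B of X such that for any finitely many distinct elements x₁,...,x_r of B and nonzero scalars a₁,...,a_r, C_V(∑ a_i x_i) = min_i C_V(x_i). -/
/-!
The superlevel sets `{x | k ≤ C x} ∪ {0}` are subspaces and form a decreasing flag that reaches
`⊥` after `ω + 1` steps. Extending bases downwards along this flag gives a basis `B` such that
each superlevel subspace is spanned by the vectors of `B` it contains. If a combination
`∑ aᵢ xᵢ` with all `aᵢ ≠ 0` had count above `m = min C(xᵢ)`, it would lie in the span of the
basis vectors of count `> m`, so by uniqueness of coordinates every `xᵢ` would have count `> m`.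
The reverse inequality is the ultrametric inequality for `C`.
-/

open Submodule Set

theorem Finset.inf'_le_sum_of_min_le_add {ι M α : Type*} [AddCommMonoid M] [LinearOrder α]
    {C : M → α} (hadd : ∀ x y, min (C x) (C y) ≤ C (x + y)) (s : Finset ι) (hs : s.Nonempty)
    (f : ι → M) : s.inf' hs (fun i => C (f i)) ≤ C (∑ i ∈ s, f i) := by
  induction hs using Finset.Nonempty.cons_induction with
  | singleton i => simp
  | cons i s his hs ih =>
    rw [Finset.sum_cons, Finset.inf'_cons hs]
    exact (min_le_min le_rfl ih).trans (hadd _ _)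

section

variable {K X : Type*} [DivisionRing K] [AddCommGroup X] [Module K X]

theorem exists_linearIndepOn_forall_le_span_inter_of_antitone {V : ℕ → Submodule K X}
    (hV : Antitone V) {n : ℕ} (hn : V n = ⊥) :
    ∃ s ⊆ (V 0 : Set X), LinearIndepOn K id s ∧ ∀ k, V k ≤ span K (s ∩ V k) := by
  induction n generalizing V with
  | zero =>
    refine ⟨∅, empty_subset _, linearIndepOn_empty K id, fun k => ?_⟩
    exact (hV k.zero_le).trans (hn.le.trans bot_le)
  | succ n ih =>
    obtain ⟨s, hs₁, hli, hspan⟩ :=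
      ih (V := fun k => V (k + 1)) (fun _ _ h => hV (Nat.succ_le_succ h)) hn
    have hs₀ : s ⊆ V 0 := hs₁.trans (hV (Nat.zero_le 1))
    refine ⟨hli.extend hs₀, hli.extend_subset hs₀, hli.linearIndepOn_extend hs₀, ?_⟩
    rintro (_ | k)
    · rw [inter_eq_left.mpr (hli.extend_subset hs₀)]
      exact fun x hx => hli.subset_span_extend hs₀ hx
    · exact (hspan k).trans (span_mono (inter_subset_inter_left _ (hli.subset_extend hs₀)))

variable (K) in
structure IsMultiVectorCount (C : X → ℕ) : Prop where
  min_le_add : ∀ x y, min (C x) (C y) ≤ C (x + y)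
  le_smul : ∀ (a : K) x, C x ≤ C (a • x)

namespace IsMultiVectorCount

variable {C : X → ℕ}

theorem apply_smul_of_ne_zero (hC : IsMultiVectorCount K C) {a : K} (ha : a ≠ 0) (x : X) :
    C (a • x) = C x := by
  refine le_antisymm ?_ (hC.le_smul a x)
  simpa [smul_smul, inv_mul_cancel₀ ha] using hC.le_smul a⁻¹ (a • x)

def superlevel (hC : IsMultiVectorCount K C) (k : ℕ) : Submodule K X where
  carrier := {x | k ≤ C x ∨ x = 0}
  zero_mem' := Or.inr rfl
  add_mem' := by
    rintro x y (hx | rfl) (hy | rfl)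
    · by_cases h : x + y = 0
      · exact Or.inr h
      · exact Or.inl ((le_min hx hy).trans (hC.min_le_add x y))
    · simpa using Or.inl hx
    · simpa using Or.inl hy
    · simp
  smul_mem' := by
    rintro a x (hx | rfl)
    · exact Or.inl (hx.trans (hC.le_smul a x))
    · simp

theorem superlevel_antitone (hC : IsMultiVectorCount K C) : Antitone hC.superlevel :=
  fun _ _ hjk _ hx => hx.imp_left hjk.trans

theorem superlevel_zero (hC : IsMultiVectorCount K C) : hC.superlevel 0 = ⊤ :=
  eq_top_iff.mpr fun _ _ => Or.inl (Nat.zero_le _)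

theorem superlevel_eq_bot (hC : IsMultiVectorCount K C) {ω : ℕ} (hb : ∀ x, C x ≤ ω) :
    hC.superlevel (ω + 1) = ⊥ :=
  eq_bot_iff.mpr fun x hx => hx.resolve_left fun h => by linarith [hb x]

theorem sum_smul_eq_inf' (hC : IsMultiVectorCount K C) {ι : Type*} (b : Module.Basis ι K X)
    (hadapted : ∀ k, hC.superlevel k ≤ span K (range b ∩ hC.superlevel k))
    (s : Finset ι) (hs : s.Nonempty) (a : ι → K) (ha : ∀ i ∈ s, a i ≠ 0) :
    C (∑ i ∈ s, a i • b i) = s.inf' hs (fun i => C (b i)) := by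
  classical
  have hge : s.inf' hs (fun i => C (b i)) ≤ C (∑ i ∈ s, a i • b i) :=
    calc s.inf' hs (fun i => C (b i)) = s.inf' hs (fun i => C (a i • b i)) :=
          Finset.inf'_congr hs rfl fun i hi => (hC.apply_smul_of_ne_zero (ha i hi) _).symm
      _ ≤ _ := Finset.inf'_le_sum_of_min_le_add hC.min_le_add s hs _
  refine le_antisymm (not_lt.mp fun hlt => ?_) hge
  obtain ⟨j, hj, hjmin⟩ := s.exists_mem_eq_inf' hs (fun i => C (b i))
  set V := hC.superlevel (s.inf' hs (fun i => C (b i)) + 1)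
  have hsupp : ↑(b.repr (∑ i ∈ s, a i • b i)).support ⊆ b ⁻¹' V := by
    rw [← b.mem_span_image, image_preimage_eq_range_inter]
    exact hadapted _ (Or.inl hlt)
  have hj_supp : j ∈ (b.repr (∑ i ∈ s, a i • b i)).support := by
    simpa [map_sum, Finsupp.single_apply, hj] using ha j hj
  rcases hsupp hj_supp with h | h
  · omega
  · exact b.ne_zero j h

end IsMultiVectorCount

end

/-- every multi vector space over a finite-dimensional space has an M-basis. -/
theorem mvs_exists_Mbasis
    {K X : Type*} [Field K] [AddCommGroup X] [Module K X] [FiniteDimensional K X]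
    (C : X → ℕ) (ω : ℕ) (hb : ∀ x, C x ≤ ω)
    (hadd : ∀ x y : X, min (C x) (C y) ≤ C (x + y))
    (hsmul : ∀ (a : K) (x : X), C x ≤ C (a • x)) :
    ∃ b : Module.Basis (Fin (Module.finrank K X)) K X,
      ∀ (s : Finset (Fin (Module.finrank K X))) (hs : s.Nonempty)
        (a : Fin (Module.finrank K X) → K), (∀ i ∈ s, a i ≠ 0) →
        C (∑ i ∈ s, a i • b i) = s.inf' hs (fun i => C (b i)) := by
  have hC : IsMultiVectorCount K C := ⟨hadd, hsmul⟩
  obtain ⟨B, -, hli, hflag⟩ := exists_linearIndepOn_forall_le_span_inter_of_antitone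
    hC.superlevel_antitone (hC.superlevel_eq_bot hb)
  have hspan : ⊤ ≤ span K (range ((↑) : B → X)) := by
    simpa [hC.superlevel_zero] using hflag 0
  let b₀ := Module.Basis.mk hli.linearIndependent hspan
  refine ⟨b₀.reindex (b₀.indexEquiv (Module.finBasis K X)), hC.sum_smul_eq_inf' _ ?_⟩
  simpa only [Module.Basis.range_reindex, b₀, Module.Basis.coe_mk, id, Subtype.range_coe]
    using hflag
end

section
/- Any two M-bases B, B' of a multi vector space V over a finite-dimensional vector space X satisfy ∑_{x ∈ B} C_V(x) = ∑_{x ∈ B'} C_V(x); consequently dim(V) = ∑_{x ∈ B} C_V(x) for any M-basis B, independent of the choice of M-basis. -/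
/-!
For an M-basis `b`, the count of a vector is the minimum count of the basis vectors in its
`b`-support, so every vector of count `> k` lies in the span of the `b i` of count `> k`. Hence, at
every level `k`, a linearly independent family has at most `#{i | k < C (b i)}` members of
count `> k`. Summing over the levels (`∑ i, f i = ∑ k, #{i | k < f i}`) shows that an M-basis
maximises the count sum over all bases: two M-bases have the same sum, and it is `mdim`.
-/

/-- The dimension of a multi vector space: the supremum of sums of counts over bases. -/
noncomputable def mdim (K : Type*) {X : Type*} [Field K] [AddCommGroup X] [Module K X]
    (C : X → ℕ) : ℕ :=
  sSup {s : ℕ | ∃ b : Module.Basis (Fin (Module.finrank K X)) K X, s = ∑ i, C (b i)}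

open Finset Module Submodule

namespace Finset

theorem sum_eq_sum_range_card_filter_lt {ι : Type*} [Fintype ι] (f : ι → ℕ) {N : ℕ}
    (hN : ∀ i, f i ≤ N) : ∑ i, f i = ∑ k ∈ range N, #{i | k < f i} := by
  simp_rw [card_filter]
  rw [sum_comm]
  refine sum_congr rfl fun i _ => ?_
  rw [← card_filter, range_eq_Ico, Ico_filter_lt, Nat.card_Ico, min_eq_right (hN i),
    Nat.sub_zero]

theorem sum_le_sum_of_card_filter_lt_le {ι κ : Type*} [Fintype ι] [Fintype κ]
    {f : ι → ℕ} {g : κ → ℕ} (h : ∀ k, #{j | k < g j} ≤ #{i | k < f i}) :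
    ∑ j, g j ≤ ∑ i, f i := by
  set N := univ.sup f ⊔ univ.sup g
  rw [sum_eq_sum_range_card_filter_lt g (N := N) fun j => le_sup_of_le_right (le_sup (mem_univ j)),
    sum_eq_sum_range_card_filter_lt f fun i => le_sup_of_le_left (le_sup (mem_univ i))]
  exact sum_le_sum fun k _ => h k

end Finset

theorem LinearIndependent.card_le_card_of_forall_mem_span_image {K X ι κ : Type*}
    [DivisionRing K] [AddCommGroup X] [Module K X] {b : ι → X} {c : κ → X}
    (hc : LinearIndependent K c) {s : Finset ι} {t : Finset κ}
    (h : ∀ j ∈ t, c j ∈ span K (b '' s)) : #t ≤ #s := by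
  have hspan : span K (Set.range fun j : t => c j) ≤ span K (Set.range fun i : s => b i) := by
    rw [span_le]
    rintro _ ⟨j, rfl⟩
    simpa [Set.image_eq_range] using h j j.2
  have : Module.Finite K (span K (Set.range fun i : s => b i)) :=
    FiniteDimensional.span_of_finite K (Set.finite_range _)
  calc #t = finrank K (span K (Set.range fun j : t => c j)) :=
        ((finrank_span_eq_card (hc.comp _ Subtype.val_injective)).trans (Fintype.card_coe t)).symm
    _ ≤ finrank K (span K (Set.range fun i : s => b i)) := Submodule.finrank_mono hspan
    _ ≤ #s := (finrank_range_le_card _).trans (Fintype.card_coe s).le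

def IsMBasis {K X ι : Type*} [Semiring K] [AddCommMonoid X] [Module K X] (C : X → ℕ)
    (b : Basis ι K X) : Prop :=
  ∀ (s : Finset ι) (hs : s.Nonempty) (a : ι → K), (∀ i ∈ s, a i ≠ 0) →
    C (∑ i ∈ s, a i • b i) = s.inf' hs (fun i => C (b i))

namespace IsMBasis

theorem count_le_of_mem_support {K X ι : Type*} [Semiring K] [AddCommMonoid X] [Module K X]
    {C : X → ℕ} {b : Basis ι K X} (hb : IsMBasis C b) {x : X} {i : ι}
    (hi : i ∈ (b.repr x).support) : C x ≤ C (b i) := by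
  have hx : ∑ i ∈ (b.repr x).support, b.repr x i • b i = x := b.linearCombination_repr x
  calc C x = (b.repr x).support.inf' ⟨i, hi⟩ fun i => C (b i) := by
        conv_lhs => rw [← hx]
        exact hb _ _ _ fun i hi => Finsupp.mem_support_iff.mp hi
    _ ≤ C (b i) := inf'_le _ hi

variable {K X ι κ : Type*} [DivisionRing K] [AddCommGroup X] [Module K X] [Fintype ι]
  [Fintype κ] {C : X → ℕ} {b : Basis ι K X} {c : κ → X}

theorem card_filter_lt_le (hb : IsMBasis C b) (hc : LinearIndependent K c) (k : ℕ) :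
    #{j | k < C (c j)} ≤ #{i | k < C (b i)} := by
  refine hc.card_le_card_of_forall_mem_span_image (b := b) fun j hj => ?_
  rw [b.mem_span_image]
  intro i hi
  simpa using (mem_filter.mp hj).2.trans_le (hb.count_le_of_mem_support hi)

theorem sum_le (hb : IsMBasis C b) (hc : LinearIndependent K c) :
    ∑ j, C (c j) ≤ ∑ i, C (b i) :=
  sum_le_sum_of_card_filter_lt_le (hb.card_filter_lt_le hc)

end IsMBasis

theorem IsMBasis.mdim_eq {K X ι : Type*} [Field K] [AddCommGroup X] [Module K X] [Fintype ι]
    {C : X → ℕ} {b : Basis ι K X} (hb : IsMBasis C b) : mdim K C = ∑ i, C (b i) := by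
  refine IsGreatest.csSup_eq ⟨?_, ?_⟩
  · let e : ι ≃ Fin (finrank K X) := Fintype.equivFinOfCardEq (finrank_eq_card_basis b).symm
    exact ⟨b.reindex e, Fintype.sum_equiv e _ _ fun i => by simp⟩
  · rintro _ ⟨c, rfl⟩
    exact hb.sum_le c.linearIndependent

theorem mvs_Mbasis_sum_unique_general
    {K X ι ι' : Type*} [Field K] [AddCommGroup X] [Module K X]
    [Fintype ι] [Fintype ι']
    (C : X → ℕ)
    (b : Module.Basis ι K X)
    (hM : ∀ (s : Finset ι) (hs : s.Nonempty) (a : ι → K), (∀ i ∈ s, a i ≠ 0) →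
      C (∑ i ∈ s, a i • b i) = s.inf' hs (fun i => C (b i)))
    (b' : Module.Basis ι' K X)
    (hM' : ∀ (s : Finset ι') (hs : s.Nonempty) (a : ι' → K), (∀ i ∈ s, a i ≠ 0) →
      C (∑ i ∈ s, a i • b' i) = s.inf' hs (fun i => C (b' i))) :
    (∑ i, C (b i) = ∑ j, C (b' j)) ∧ mdim K C = ∑ i, C (b i) := by
  have hb : IsMBasis C b := hM
  have hb' : IsMBasis C b' := hM'
  exact ⟨(hb'.sum_le b.linearIndependent).antisymm (hb.sum_le b'.linearIndependent), hb.mdim_eq⟩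

/-- any two M-bases give the same count sum, which equals `mdim`. -/
theorem mvs_Mbasis_sum_unique
    {K X ι ι' : Type*} [Field K] [AddCommGroup X] [Module K X] [FiniteDimensional K X]
    [Fintype ι] [Fintype ι']
    (C : X → ℕ)
    (hadd : ∀ x y : X, min (C x) (C y) ≤ C (x + y))
    (hsmul : ∀ (a : K) (x : X), C x ≤ C (a • x))
    (b : Module.Basis ι K X)
    (hM : ∀ (s : Finset ι) (hs : s.Nonempty) (a : ι → K), (∀ i ∈ s, a i ≠ 0) →
      C (∑ i ∈ s, a i • b i) = s.inf' hs (fun i => C (b i)))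
    (b' : Module.Basis ι' K X)
    (hM' : ∀ (s : Finset ι') (hs : s.Nonempty) (a : ι' → K), (∀ i ∈ s, a i ≠ 0) →
      C (∑ i ∈ s, a i • b' i) = s.inf' hs (fun i => C (b' i))) :
    (∑ i, C (b i) = ∑ j, C (b' j)) ∧ mdim K C = ∑ i, C (b i) :=
  mvs_Mbasis_sum_unique_general C b hM b' hM'
end

section
/- Let V be a multi vector space over a finite-dimensional vector space X and f : X → Y a linear map. Define the multi vector spaces ker̃f on ker f with count C_V restricted to ker f, and im̃f on im f with count C_{f(V)}(y) = sup{C_V(z) : z ∈ f⁻¹(y)} for y ∈ im f. Then dim(ker̃f) + dim(im̃f) = dim(V). -/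
/-!
For a count `C ≤ ω`, the superlevel sets `V n = {z | n ≤ C z} ∪ {0}` are subspaces, and a basis
`b` maximising `∑ i, C (b i)` is adapted to all of them at once: if `V n` were bigger than the span
of the basis vectors of count `≥ n`, a vector of `V n` outside that span could be exchanged for a
basis vector of count `< n`, increasing the sum. Hence `dim V = ∑ n ∈ [1, ω], finrank (V n)`.
The superlevel sets of `ker̃ f` and `im̃ f` are `V n ∩ ker f` and `f (V n)`, so the theorem is
ordinary rank-nullity for `f` restricted to each `V n`, summed over `n`.
-/

open Module Submodule Finset

theorem Finset.sum_eq_sum_card_filter_le {ι : Type*} (s : Finset ι) {g : ι → ℕ} {ω : ℕ}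
    (hg : ∀ i ∈ s, g i ≤ ω) :
    ∑ i ∈ s, g i = ∑ n ∈ Icc 1 ω, #{i ∈ s | n ≤ g i} := by
  have hcount : ∀ i ∈ s, g i = #{n ∈ Icc 1 ω | n ≤ g i} := fun i hi => by
    rw [show {n ∈ Icc 1 ω | n ≤ g i} = Icc 1 (g i) by
      ext n; simp only [mem_filter, mem_Icc]; have := hg i hi; omega, Nat.card_Icc]
    omega
  rw [sum_congr rfl hcount]
  simp only [card_filter]
  exact sum_comm

theorem Module.Basis.exists_coe_eq_update {K Z ι : Type*} [Field K] [AddCommGroup Z]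
    [Module K Z] [Fintype ι] [DecidableEq ι] (b : Basis ι K Z) {i : ι} {w : Z}
    (hw : b.repr w i ≠ 0) : ∃ b' : Basis ι K Z, ⇑b' = Function.update b i w := by
  have : FiniteDimensional K Z := b.finiteDimensional_of_finite
  have hli : LinearIndependent K (Function.update b i w) :=
    b.linearIndependent.update i w ⟨1, one_mem _, b.repr w, mem_nonZeroDivisors_of_ne_zero hw,
      by rw [one_smul, b.linearCombination_repr]⟩
  exact ⟨basisOfLinearIndependentOfCardEqFinrank' _ hli (finrank_eq_card_basis b).symm,
    coe_basisOfLinearIndependentOfCardEqFinrank' _ _ _⟩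

theorem Submodule.finrank_comap_subtype {K Z : Type*} [Field K] [AddCommGroup Z] [Module K Z]
    (p q : Submodule K Z) : finrank K (q.comap p.subtype) = finrank K ↥(p ⊓ q) := by
  rw [← finrank_map_subtype_eq, map_comap_subtype]

theorem LinearMap.finrank_comap_ker_add_finrank_comap_range {K X Y : Type*} [Field K]
    [AddCommGroup X] [Module K X] [AddCommGroup Y] [Module K Y] (f : X →ₗ[K] Y)
    (V : Submodule K X) [FiniteDimensional K V] :
    finrank K (V.comap (ker f).subtype) + finrank K ((V.map f).comap (range f).subtype)
      = finrank K V := by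
  have h := (f.domRestrict V).finrank_range_add_finrank_ker
  rw [range_domRestrict, ker_domRestrict, finrank_comap_subtype] at h
  rw [finrank_comap_subtype, finrank_comap_subtype, inf_eq_right.mpr (map_le_range), inf_comm]
  omega

structure IsMultiVectorSpace (K : Type*) {Z : Type*} [Field K] [AddCommGroup Z] [Module K Z]
    (C : Z → ℕ) : Prop where
  min_le_add : ∀ x y : Z, min (C x) (C y) ≤ C (x + y)
  le_smul : ∀ (a : K) (x : Z), C x ≤ C (a • x)

namespace IsMultiVectorSpace

variable {K Z W : Type*} [Field K] [AddCommGroup Z] [Module K Z] [AddCommGroup W] [Module K W]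
  {C : Z → ℕ}

def superlevel (hC : IsMultiVectorSpace K C) (n : ℕ) : Submodule K Z where
  carrier := {z | z = 0 ∨ n ≤ C z}
  zero_mem' := Or.inl rfl
  add_mem' := by
    rintro x y (rfl | hx) (rfl | hy)
    · simp
    · simpa using Or.inr hy
    · simpa using Or.inr hx
    · exact Or.inr ((le_min hx hy).trans (hC.min_le_add x y))
  smul_mem' := by
    rintro a x (rfl | hx)
    · simp
    · exact Or.inr (hx.trans (hC.le_smul a x))

theorem mem_superlevel (hC : IsMultiVectorSpace K C) {n : ℕ} {z : Z} :
    z ∈ hC.superlevel n ↔ z = 0 ∨ n ≤ C z := Iff.rfl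

theorem comp (hC : IsMultiVectorSpace K C) (g : W →ₗ[K] Z) : IsMultiVectorSpace K (C ∘ g) where
  min_le_add x y := by simpa using hC.min_le_add (g x) (g y)
  le_smul a x := by simpa using hC.le_smul a (g x)

theorem superlevel_comp (hC : IsMultiVectorSpace K C) {g : W →ₗ[K] Z}
    (hg : Function.Injective g) (n : ℕ) :
    (hC.comp g).superlevel n = (hC.superlevel n).comap g := by
  ext w
  simp [mem_superlevel, map_eq_zero_iff g hg]

variable [FiniteDimensional K Z] {ι : Type*} [Fintype ι]

theorem card_filter_le_finrank_superlevel (hC : IsMultiVectorSpace K C) {v : ι → Z}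
    (hv : LinearIndependent K v) (n : ℕ) :
    #{i | n ≤ C (v i)} ≤ finrank K (hC.superlevel n) := by
  let u : {i // n ≤ C (v i)} → hC.superlevel n := fun i => ⟨v i, Or.inr i.2⟩
  have hu : LinearIndependent K u :=
    .of_comp (hC.superlevel n).subtype (hv.comp Subtype.val Subtype.val_injective)
  simpa [Fintype.card_subtype] using hu.fintype_card_le_finrank

theorem finrank_superlevel_le_card_filter (hC : IsMultiVectorSpace K C) (b : Basis ι K Z)
    (hmax : ∀ b' : Basis ι K Z, ∑ i, C (b' i) ≤ ∑ i, C (b i)) (n : ℕ) :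
    finrank K (hC.superlevel n) ≤ #{i | n ≤ C (b i)} := by
  classical
  set T : Finset ι := {i | n ≤ C (b i)}
  by_contra! hlt
  obtain ⟨w, hw, hw_span⟩ : ∃ w ∈ hC.superlevel n, w ∉ span K (b '' T) := by
    refine SetLike.not_le_iff_exists.mp fun hle => hlt.not_ge ?_
    calc finrank K (hC.superlevel n) ≤ finrank K (span K (b '' T)) := finrank_mono hle
      _ ≤ #(T.image b) := by
        rw [← coe_image]; exact finrank_span_finset_le_card (T.image b)
      _ ≤ #T := card_image_le
  have hCw : n ≤ C w :=
    (hC.mem_superlevel.mp hw).resolve_left fun h => hw_span (h ▸ zero_mem _)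
  obtain ⟨i₀, hi₀_supp, hi₀T⟩ := Set.not_subset.mp (mt b.mem_span_image.mpr hw_span)
  have hi₀ : C (b i₀) < C w := lt_of_lt_of_le (by simpa [T] using hi₀T) hCw
  obtain ⟨b', hb'⟩ := b.exists_coe_eq_update (Finsupp.mem_support_iff.mp hi₀_supp)
  refine (hmax b').not_gt (sum_lt_sum (fun i _ => ?_) ⟨i₀, mem_univ _, by simpa [hb'] using hi₀⟩)
  rcases eq_or_ne i i₀ with rfl | hi
  · simpa [hb'] using hi₀.le
  · simp [hb', hi]

theorem mdim_eq_sum_finrank_superlevel (hC : IsMultiVectorSpace K C) {ω : ℕ}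
    (hb : ∀ z, C z ≤ ω) : mdim K C = ∑ n ∈ Icc 1 ω, finrank K (hC.superlevel n) := by
  set S : Set ℕ := {s | ∃ b : Basis (Fin (finrank K Z)) K Z, s = ∑ i, C (b i)}
  have hS : BddAbove S := ⟨finrank K Z * ω, by
    rintro _ ⟨b, rfl⟩
    simpa using sum_le_sum fun i (_ : i ∈ univ) => hb (b i)⟩
  obtain ⟨b, hb_max⟩ : sSup S ∈ S := Nat.sSup_mem ⟨_, finBasis K Z, rfl⟩ hS
  have hmax : ∀ b' : Basis _ K Z, ∑ i, C (b' i) ≤ ∑ i, C (b i) :=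
    fun b' => hb_max ▸ le_csSup hS ⟨b', rfl⟩
  rw [mdim, hb_max, sum_eq_sum_card_filter_le _ fun i _ => hb (b i)]
  exact sum_congr rfl fun n _ => le_antisymm
    (hC.card_filter_le_finrank_superlevel b.linearIndependent n)
    (hC.finrank_superlevel_le_card_filter b hmax n)

end IsMultiVectorSpace

section imageCount

variable {K X Y : Type*} [Field K] [AddCommGroup X] [Module K X] [AddCommGroup Y] [Module K Y]

noncomputable def imageCount (C : X → ℕ) (f : X →ₗ[K] Y) (y : LinearMap.range f) : ℕ :=
  sSup {n | ∃ z, f z = y ∧ C z = n}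

variable {C : X → ℕ} {ω : ℕ}

theorem bddAbove_counts_of_le (hb : ∀ x, C x ≤ ω) (f : X →ₗ[K] Y) (y : Y) :
    BddAbove {n | ∃ z, f z = y ∧ C z = n} :=
  bddAbove_def.2 ⟨ω, by rintro _ ⟨z, _, rfl⟩; exact hb z⟩

variable {f : X →ₗ[K] Y}

theorem exists_imageCount_eq (hb : ∀ x, C x ≤ ω) (y : LinearMap.range f) :
    ∃ z, f z = y ∧ C z = imageCount C f y := by
  obtain ⟨z, hz⟩ := y.2
  refine Nat.sSup_mem ?_ (bddAbove_counts_of_le hb f y)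
  exact ⟨C z, z, hz, rfl⟩

theorem le_imageCount (hb : ∀ x, C x ≤ ω) {z : X} {y : LinearMap.range f} (hz : f z = y) :
    C z ≤ imageCount C f y :=
  le_csSup (bddAbove_counts_of_le hb f y) ⟨z, hz, rfl⟩

theorem imageCount_le (hb : ∀ x, C x ≤ ω) (y : LinearMap.range f) : imageCount C f y ≤ ω := by
  obtain ⟨z, -, hz⟩ := exists_imageCount_eq hb y
  exact hz ▸ hb z

namespace IsMultiVectorSpace

theorem map (hC : IsMultiVectorSpace K C) (f : X →ₗ[K] Y) (hb : ∀ x, C x ≤ ω) :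
    IsMultiVectorSpace K (imageCount C f) where
  min_le_add y₁ y₂ := by
    obtain ⟨z₁, hz₁, h₁⟩ := exists_imageCount_eq hb y₁
    obtain ⟨z₂, hz₂, h₂⟩ := exists_imageCount_eq hb y₂
    calc min (imageCount C f y₁) (imageCount C f y₂) = min (C z₁) (C z₂) := by rw [h₁, h₂]
      _ ≤ C (z₁ + z₂) := hC.min_le_add z₁ z₂
      _ ≤ _ := le_imageCount hb (by simp [hz₁, hz₂])
  le_smul a y := by
    obtain ⟨z, hz, h⟩ := exists_imageCount_eq hb y
    calc imageCount C f y = C z := h.symm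
      _ ≤ C (a • z) := hC.le_smul a z
      _ ≤ _ := le_imageCount hb (by simp [hz])

theorem superlevel_map (hC : IsMultiVectorSpace K C) (f : X →ₗ[K] Y) (hb : ∀ x, C x ≤ ω)
    (n : ℕ) :
    (hC.map f hb).superlevel n = ((hC.superlevel n).map f).comap (LinearMap.range f).subtype := by
  ext y
  simp only [mem_superlevel, mem_comap, subtype_apply]
  constructor
  · rintro (rfl | hy)
    · exact ⟨0, Or.inl rfl, by simp⟩
    · obtain ⟨z, hz, h⟩ := exists_imageCount_eq hb y
      exact ⟨z, Or.inr (h ▸ hy), hz⟩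
  · rintro ⟨z, rfl | hz, hzy⟩
    · exact Or.inl (Subtype.ext (by simpa using hzy.symm))
    · exact Or.inr (hz.trans (le_imageCount hb hzy))

end IsMultiVectorSpace

end imageCount

/-- rank-nullity for multi vector spaces:
`dim(ker̃ f) + dim(im̃ f) = dim V`. -/
theorem mvs_rank_nullity
    {K X Y : Type*} [Field K] [AddCommGroup X] [Module K X] [FiniteDimensional K X]
    [AddCommGroup Y] [Module K Y]
    (C : X → ℕ) (ω : ℕ) (hb : ∀ x, C x ≤ ω)
    (hadd : ∀ x y : X, min (C x) (C y) ≤ C (x + y))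
    (hsmul : ∀ (a : K) (x : X), C x ≤ C (a • x))
    (f : X →ₗ[K] Y) :
    mdim K (fun z : LinearMap.ker f => C (z : X))
      + mdim K (fun y : LinearMap.range f => sSup {n : ℕ | ∃ z : X, f z = (y : Y) ∧ C z = n})
      = mdim K C := by
  have hC : IsMultiVectorSpace K C := ⟨hadd, hsmul⟩
  change mdim K (C ∘ (LinearMap.ker f).subtype) + mdim K (imageCount C f) = mdim K C
  rw [(hC.comp _).mdim_eq_sum_finrank_superlevel fun _ => hb _,
    (hC.map f hb).mdim_eq_sum_finrank_superlevel (imageCount_le hb),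
    hC.mdim_eq_sum_finrank_superlevel hb, ← sum_add_distrib]
  refine sum_congr rfl fun n _ => ?_
  rw [hC.superlevel_comp (LinearMap.ker f).injective_subtype, hC.superlevel_map f hb]
  exact f.finrank_comap_ker_add_finrank_comap_range _
end
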